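/- arXiv:2207.09937 — 2 statements merged into one kernel-verified Lean document; each statement's English description precedes it below -/
import Mathlib

section
/- An infinite word x over a finite alphabet has bounded abelian complexity if and only if x is C-balanced for some positive integer C. -/
/-!
Sliding a window of length `n` one step to the right changes the number of occurrences of each
letter by at most one. Hence, by a discrete intermediate value argument, if two factors of length
`n` contain `p` and `q` occurrences of `a`, every value between `p` and `q` occurs as well, giving
at least `|p - q| + 1` Parikh vectors of length `n`. Conversely, if `x` is `C`-balanced, every
Parikh vector of length `n` lies in the box of side `2C + 1` centred at that of the prefix of
length `n`, so there are at most `(2C + 1) ^ d` of them.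
-/

/-- The factor of the infinite word `x` of length `n` starting at position `i`. -/
def factorW {d : ℕ} (x : ℕ → Fin d) (i n : ℕ) : List (Fin d) :=
  (List.range n).map (fun j => x (i + j))

/-- The abelian complexity of `x` at `n`: the number of distinct Parikh vectors
of factors of `x` of length `n`. -/
noncomputable def abComplexity {d : ℕ} (x : ℕ → Fin d) (n : ℕ) : ℕ :=
  Set.ncard {p : Fin d → ℕ | ∃ i, ∀ a, (factorW x i n).count a = p a}

theorem Nat.uIcc_subset_range_of_succ_le {g : ℕ → ℕ} (hup : ∀ k, g (k + 1) ≤ g k + 1)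
    (hdown : ∀ k, g k ≤ g (k + 1) + 1) (i j : ℕ) : Set.uIcc (g i) (g j) ⊆ Set.range g := by
  wlog hij : i ≤ j generalizing i j
  · rw [Set.uIcc_comm]
    exact this j i (by omega)
  induction j, hij using Nat.le_induction with
  | base => simp
  | succ j _ ih =>
    intro v hv
    by_cases hvj : v ∈ Set.uIcc (g i) (g j)
    · exact ih hvj
    · have := hup j
      have := hdown j
      simp only [Set.mem_uIcc] at hv hvj
      exact ⟨j + 1, by omega⟩

section Factors

variable {d : ℕ} (x : ℕ → Fin d)

def parikhVector (i n : ℕ) : Fin d → ℕ :=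
  fun a => (factorW x i n).count a

theorem factorW_length (i n : ℕ) : (factorW x i n).length = n := by
  simp [factorW]

theorem factorW_succ_eq_append (i n : ℕ) :
    factorW x i (n + 1) = factorW x i n ++ [x (i + n)] := by
  simp [factorW, List.range_succ]

theorem factorW_succ_eq_cons (i n : ℕ) :
    factorW x i (n + 1) = x i :: factorW x (i + 1) n := by
  simp only [factorW, List.range_succ_eq_map, List.map_cons, List.map_map, Nat.add_zero]
  congr 2
  funext j
  simp only [Function.comp_apply]
  congr 1
  omega

theorem count_factorW_succ_le (a : Fin d) (i n : ℕ) :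
    (factorW x (i + 1) n).count a ≤ (factorW x i n).count a + 1 ∧
      (factorW x i n).count a ≤ (factorW x (i + 1) n).count a + 1 := by
  have h := congrArg (List.count a)
    ((factorW_succ_eq_append x i n).symm.trans (factorW_succ_eq_cons x i n))
  simp only [List.count_append, List.count_cons, List.count_nil] at h
  split_ifs at h <;> omega

theorem abComplexity_eq_ncard_range (n : ℕ) :
    abComplexity x n = (Set.range (parikhVector x · n)).ncard := by
  rw [abComplexity]
  congr 1
  ext p
  simp [parikhVector, funext_iff, eq_comm]

theorem finite_range_parikhVector (n : ℕ) : (Set.range (parikhVector x · n)).Finite := by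
  refine (Set.finite_Icc 0 fun _ => n).subset ?_
  rintro _ ⟨i, rfl⟩
  refine ⟨fun _ => Nat.zero_le _, fun a => ?_⟩
  simpa [parikhVector, factorW_length] using (factorW x i n).count_le_length (a := a)

theorem natAbs_sub_add_one_le_abComplexity (a : Fin d) (i j n : ℕ) :
    (((factorW x i n).count a : ℤ) - (factorW x j n).count a).natAbs + 1 ≤ abComplexity x n := by
  have hivt := Nat.uIcc_subset_range_of_succ_le (g := fun k => (factorW x k n).count a)
    (fun k => (count_factorW_succ_le x a k n).1) (fun k => (count_factorW_succ_le x a k n).2) j i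
  have hrange : Set.range (fun k => (factorW x k n).count a) =
      (fun p => p a) '' Set.range (parikhVector x · n) := by
    rw [← Set.range_comp]
    rfl
  rw [← Nat.card_uIcc, ← Set.ncard_coe_finset, Finset.coe_uIcc, abComplexity_eq_ncard_range]
  calc (Set.uIcc _ _).ncard
      ≤ ((fun p => p a) '' Set.range (parikhVector x · n)).ncard :=
        Set.ncard_le_ncard (hrange ▸ hivt) ((finite_range_parikhVector x n).image _)
    _ ≤ _ := Set.ncard_image_le (finite_range_parikhVector x n)

theorem abComplexity_le_of_balanced {C n : ℕ}
    (hbal : ∀ (a : Fin d) (i : ℕ),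
      (((factorW x i n).count a : ℤ) - (factorW x 0 n).count a).natAbs ≤ C) :
    abComplexity x n ≤ (2 * C + 1) ^ d := by
  set q := parikhVector x 0 n
  have hbox : Set.range (parikhVector x · n) ⊆ Set.Icc (fun a => q a - C) (fun a => q a + C) := by
    rintro _ ⟨i, rfl⟩
    refine ⟨fun a => ?_, fun a => ?_⟩ <;>
    · have := hbal a i
      simp only [q, parikhVector] at this ⊢
      omega
  rw [abComplexity_eq_ncard_range]
  calc (Set.range (parikhVector x · n)).ncard
      ≤ (Set.Icc (fun a => q a - C) (fun a => q a + C)).ncard :=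
        Set.ncard_le_ncard hbox (Set.finite_Icc _ _)
    _ = ∏ a, (q a + C + 1 - (q a - C)) := by
        rw [← Finset.coe_Icc, Set.ncard_coe_finset, Pi.card_Icc]
        simp
    _ ≤ (2 * C + 1) ^ d :=
        (Finset.prod_le_pow_card _ _ (2 * C + 1) fun a _ => by omega).trans_eq (by simp)

end Factors

/-- An infinite word has bounded abelian complexity iff it is `C`-balanced for some
positive integer `C` (for every letter, the numbers of its occurrences in any two
factors of the same length differ by at most `C`). -/
theorem stmt2 {d : ℕ} (x : ℕ → Fin d) :
    (∃ M : ℕ, ∀ n, abComplexity x n ≤ M) ↔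
      (∃ C : ℕ, 0 < C ∧ ∀ (a : Fin d) (i j n : ℕ),
        (((factorW x i n).count a : ℤ) - ((factorW x j n).count a : ℤ)).natAbs ≤ C) := by
  constructor
  · rintro ⟨M, hM⟩
    refine ⟨M + 1, M.succ_pos, fun a i j n => ?_⟩
    have := natAbs_sub_add_one_le_abComplexity x a i j n
    have := hM n
    omega
  · rintro ⟨C, -, hbal⟩
    exact ⟨(2 * C + 1) ^ d, fun n => abComplexity_le_of_balanced x fun a i => hbal a i 0 n⟩
end

section
/- For every Sturmian word s_α of slope α, the abelian critical exponent satisfies χ_ab(s_α) ≥ √5, and the abelian critical exponent of the Fibonacci word (slope α = φ − 1 = (√5−1)/2) equals √5 exactly. -/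
/-!
An abelian `k`-power of period `m` starting at `i` in the Sturmian word `s_{α,ρ}` is, after
telescoping, an arithmetic progression `⌊α (i + j m) + ρ⌋ = ⌊α i + ρ⌋ + j c` for `j ≤ k`.
Such a progression forces `k ‖mα‖ < 1`, where `‖·‖` is the distance to the nearest integer;
conversely, if `k ‖mα‖ < 1`, density of the orbit of the irrational rotation supplies a start `i`.
So `k_m` is `1 / ‖mα‖` up to an additive constant and `χ_ab(s_α) = limsup (m ‖mα‖)⁻¹`.
Hurwitz's theorem (of three consecutive continued-fraction convergents `p/q` one has
`q ‖qα‖ < 1/√5`) gives `χ_ab ≥ √5`. For the golden slope `φ = (√5 - 1)/2` the norm form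
`m² - m p - p²` with `p = round (m φ)` is a nonzero integer, whence `‖mφ‖ ≥ 1 / (√5 m + 1/2)`
and `χ_ab ≤ √5`.
-/

open scoped ENNReal

/-- The Sturmian word of slope `α` and intercept `ρ`:
`s(n) = ⌊α(n+1)+ρ⌋ − ⌊αn+ρ⌋`. -/
noncomputable def sturmian (α ρ : ℝ) (n : ℕ) : ℤ :=
  ⌊α * (n + 1) + ρ⌋ - ⌊α * n + ρ⌋

/-- `s` contains an abelian power of period `m` and exponent `k`: for some position
`i`, the `k` consecutive blocks of length `m` starting at `i` all have the same sum
(equivalently, for a binary word, the same number of occurrences of each letter). -/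
def HasAbPow (s : ℕ → ℤ) (m k : ℕ) : Prop :=
  ∃ i : ℕ, ∀ j < k,
    (∑ t ∈ Finset.range m, s (i + j * m + t)) = ∑ t ∈ Finset.range m, s (i + t)

/-- `k_m`: the maximal exponent of an abelian power of period `m` occurring in `s`. -/
noncomputable def kmax (s : ℕ → ℤ) (m : ℕ) : ℝ≥0∞ :=
  ⨆ (k : ℕ) (_ : HasAbPow s m k), (k : ℝ≥0∞)

/-- The abelian critical exponent `χ_ab(s) = limsup_{m→∞} k_m / m`. -/
noncomputable def abCritExp (s : ℕ → ℤ) : ℝ≥0∞ :=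
  Filter.atTop.limsup (fun m => kmax s m / (m : ℝ≥0∞))

open Filter Set
open scoped Topology

lemma sum_range_block_sub (f : ℕ → ℤ) (p m : ℕ) :
    ∑ t ∈ Finset.range m, (f (p + t + 1) - f (p + t)) = f (p + m) - f p := by
  simpa [add_assoc] using Finset.sum_range_sub (fun t => f (p + t)) m

lemma hasAbPow_sub_iff (f : ℕ → ℤ) (m k : ℕ) :
    HasAbPow (fun n => f (n + 1) - f n) m k ↔
      ∃ i : ℕ, ∃ c : ℤ, ∀ j ≤ k, f (i + j * m) = f i + j * c := by
  simp only [HasAbPow, sum_range_block_sub]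
  constructor
  · rintro ⟨i, hi⟩
    refine ⟨i, f (i + m) - f i, fun j hj => ?_⟩
    induction j with
    | zero => simp
    | succ j ih =>
      have hblock := hi j (by omega)
      rw [show i + j * m + m = i + (j + 1) * m by ring] at hblock
      push_cast
      linarith [ih (by omega)]
  · rintro ⟨i, c, hi⟩
    refine ⟨i, fun j hj => ?_⟩
    have h₁ := hi 1 (by omega)
    have hj₀ := hi j hj.le
    have hj₁ := hi (j + 1) hj
    rw [show i + (j + 1) * m = i + j * m + m by ring] at hj₁
    simp only [one_mul, Nat.cast_one] at h₁
    push_cast at hj₁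
    linarith

lemma hasAbPow_sturmian_iff (α ρ : ℝ) (m k : ℕ) :
    HasAbPow (sturmian α ρ) m k ↔
      ∃ i : ℕ, ∃ c : ℤ, ∀ j ≤ k, ⌊α * ↑(i + j * m) + ρ⌋ = ⌊α * i + ρ⌋ + j * c := by
  have hdiff : sturmian α ρ = fun n : ℕ => ⌊α * ↑(n + 1) + ρ⌋ - ⌊α * n + ρ⌋ := by
    ext n
    simp [sturmian]
  rw [hdiff]
  exact hasAbPow_sub_iff (fun n => ⌊α * n + ρ⌋) m k

/-- The `k` blocks together have weight `k c`, which differs from `k m α` by less than `1`. -/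
lemma HasAbPow.mul_abs_sub_round_lt_one {α ρ : ℝ} {m k : ℕ}
    (h : HasAbPow (sturmian α ρ) m k) : k * |m * α - round (m * α)| < 1 := by
  rw [hasAbPow_sturmian_iff] at h
  obtain ⟨i, c, hi⟩ := h
  have hk := hi k le_rfl
  have hfloor : ⌊(α * i + ρ) + k * (m * α)⌋ = ⌊(α * i + ρ) + (k * c : ℤ)⌋ := by
    rw [Int.floor_add_intCast, ← hk]
    push_cast
    ring_nf
  have hlt := Int.abs_sub_lt_one_of_floor_eq_floor hfloor
  calc (k : ℝ) * |m * α - round (m * α)| ≤ k * |m * α - c| :=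
        mul_le_mul_of_nonneg_left (round_le _ _) k.cast_nonneg
    _ = |k * (m * α - c)| := by rw [abs_mul, Nat.abs_cast]
    _ = |(α * i + ρ) + k * (m * α) - ((α * i + ρ) + (k * c : ℤ))| := by
        push_cast
        ring_nf
    _ < 1 := hlt

lemma exists_add_nat_mul_sub_int_mem_Ioo {δ a b : ℝ} (hδ : δ ≠ 0) (hab : |δ| < b - a) (y : ℝ) :
    ∃ t : ℕ, ∃ z : ℤ, y + t * δ - z ∈ Ioo a b := by
  wlog hδpos : 0 < δ generalizing δ y a b
  · obtain ⟨t, z, h₁, h₂⟩ := this (neg_ne_zero.2 hδ) (b := -a) (a := -b)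
      (by rw [abs_neg]; linarith) (-y) (neg_pos.2 ((not_lt.1 hδpos).lt_of_ne hδ))
    exact ⟨t, -z, by push_cast; constructor <;> linarith⟩
  rw [abs_of_pos hδpos] at hab
  set z : ℤ := ⌈y - a⌉
  have hz : y - a ≤ z := Int.le_ceil _
  have hs : 0 ≤ (a + z - y) / δ := div_nonneg (by linarith) hδpos.le
  refine ⟨⌊(a + z - y) / δ⌋₊ + 1, z, ?_, ?_⟩
  · have h := Nat.lt_floor_add_one ((a + z - y) / δ)
    rw [div_lt_iff₀ hδpos] at h
    push_cast
    linarith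
  · have h := Nat.floor_le hs
    rw [le_div_iff₀ hδpos] at h
    push_cast
    linarith

/-- A Dirichlet approximation `k α ≈ round (k α)` gives a rotation by less than the length of
the interval, which then walks into it. -/
lemma exists_mul_add_sub_int_mem_Ioo {α : ℝ} (hα : Irrational α) (ρ : ℝ) {a b : ℝ}
    (hab : a < b) : ∃ i : ℕ, ∃ z : ℤ, α * i + ρ - z ∈ Ioo a b := by
  obtain ⟨n, hn⟩ := exists_nat_one_div_lt (sub_pos.2 hab)
  obtain ⟨k, hk, -, hkα⟩ := Real.exists_nat_abs_mul_sub_round_le α n.succ_pos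
  have hδ : (k : ℝ) * α - round ((k : ℝ) * α) ≠ 0 :=
    sub_ne_zero.2 ((mul_comm α k ▸ hα.mul_natCast hk.ne').ne_int _)
  have hsmall : |(k : ℝ) * α - round ((k : ℝ) * α)| < b - a :=
    hkα.trans_lt (lt_of_le_of_lt (by gcongr; linarith) hn)
  obtain ⟨t, z, hz⟩ := exists_add_nat_mul_sub_int_mem_Ioo hδ hsmall ρ
  refine ⟨k * t, z + t * round ((k : ℝ) * α), ?_⟩
  convert hz using 1
  push_cast
  ring

lemma hasAbPow_sturmian_of_mul_abs_sub_round_lt_one {α : ℝ} (hα : Irrational α) (ρ : ℝ)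
    {m k : ℕ} (h : k * |m * α - round (m * α)| < 1) : HasAbPow (sturmian α ρ) m k := by
  set c := round ((m : ℝ) * α)
  set δ := (m : ℝ) * α - c
  have hkδ : |k * δ| < 1 := by rwa [abs_mul, Nat.abs_cast]
  rw [abs_lt] at hkδ
  have hIoo : max 0 (-(k * δ)) < min 1 (1 - k * δ) := by
    simp only [lt_min_iff, max_lt_iff]
    constructor <;> constructor <;> linarith
  obtain ⟨i, z, hlo, hhi⟩ := exists_mul_add_sub_int_mem_Ioo hα ρ hIoo
  rw [max_lt_iff] at hlo
  rw [lt_min_iff] at hhi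
  have hfloor : ∀ j ≤ k, ⌊α * ↑(i + j * m) + ρ⌋ = z + j * c := by
    intro j hj
    have hjk : (j : ℝ) ≤ k := by exact_mod_cast hj
    have hj₀ : (0 : ℝ) ≤ j := j.cast_nonneg
    rw [Int.floor_eq_iff]
    push_cast
    have hsplit : α * (i + j * m) + ρ = (α * i + ρ - z) + j * δ + (z + j * c) := by ring
    rw [hsplit]
    rcases le_total 0 δ with hδ | hδ
    · constructor <;> nlinarith
    · constructor <;> nlinarith
  rw [hasAbPow_sturmian_iff]
  refine ⟨i, c, fun j hj => ?_⟩
  have h₀ := hfloor 0 (Nat.zero_le k)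
  simp only [zero_mul, add_zero, CharP.cast_eq_zero] at h₀
  rw [hfloor j hj, h₀]

section ContinuedFractions

noncomputable def completeQuot (ξ : ℝ) : ℕ → ℝ
  | 0 => ξ
  | n + 1 => (Int.fract (completeQuot ξ n))⁻¹

noncomputable def partialQuot (ξ : ℝ) (n : ℕ) : ℤ := ⌊completeQuot ξ n⌋

/-- With the index shifted by one, `convNum ξ (n + 1) / convDen ξ (n + 1)` is the `n`-th
convergent of `ξ`; index `0` holds the usual seed values `p₋₁ = 1`, `q₋₁ = 0`. -/
noncomputable def convNum (ξ : ℝ) : ℕ → ℤ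
  | 0 => 1
  | 1 => partialQuot ξ 0
  | n + 2 => partialQuot ξ (n + 1) * convNum ξ (n + 1) + convNum ξ n

noncomputable def convDen (ξ : ℝ) : ℕ → ℤ
  | 0 => 0
  | 1 => 1
  | n + 2 => partialQuot ξ (n + 1) * convDen ξ (n + 1) + convDen ξ n

noncomputable def convErr (ξ : ℝ) (n : ℕ) : ℝ := convDen ξ n * ξ - convNum ξ n

lemma convDen_add_two (ξ : ℝ) (n : ℕ) :
    convDen ξ (n + 2) = partialQuot ξ (n + 1) * convDen ξ (n + 1) + convDen ξ n := rfl

variable {ξ : ℝ}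

lemma completeQuot_eq_add_inv (ξ : ℝ) (n : ℕ) :
    completeQuot ξ n = partialQuot ξ n + (completeQuot ξ (n + 1))⁻¹ := by
  rw [completeQuot, inv_inv, partialQuot, Int.floor_add_fract]

lemma convErr_add_two (ξ : ℝ) (n : ℕ) :
    convErr ξ (n + 2) = partialQuot ξ (n + 1) * convErr ξ (n + 1) + convErr ξ n := by
  simp only [convErr, convNum, convDen]
  push_cast
  ring

lemma convDen_mul_convErr_sub (ξ : ℝ) (n : ℕ) :
    convDen ξ (n + 1) * convErr ξ n - convDen ξ n * convErr ξ (n + 1) = (-1) ^ (n + 1) := by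
  induction n with
  | zero => simp [convErr, convNum, convDen]
  | succ n ih =>
    rw [convErr_add_two, convDen_add_two, pow_succ, ← ih]
    push_cast
    ring

lemma Irrational.completeQuot (hξ : Irrational ξ) (n : ℕ) : Irrational (completeQuot ξ n) := by
  induction n with
  | zero => exact hξ
  | succ n ih => exact (ih.sub_intCast _).inv

lemma one_lt_completeQuot_succ (hξ : Irrational ξ) (n : ℕ) : 1 < completeQuot ξ (n + 1) :=
  (one_lt_inv₀ (Int.fract_pos.2 ((hξ.completeQuot n).ne_int _))).2 (Int.fract_lt_one _)

lemma one_le_partialQuot_succ (hξ : Irrational ξ) (n : ℕ) : 1 ≤ partialQuot ξ (n + 1) :=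
  Int.le_floor.2 (by exact_mod_cast (one_lt_completeQuot_succ hξ n).le)

lemma convDen_add_two_ge (hξ : Irrational ξ) (n : ℕ) (hn : 0 ≤ convDen ξ (n + 1)) :
    convDen ξ (n + 1) + convDen ξ n ≤ convDen ξ (n + 2) := by
  have := one_le_partialQuot_succ hξ n
  rw [convDen_add_two]
  nlinarith

lemma one_le_convDen_succ (hξ : Irrational ξ) (n : ℕ) : 1 ≤ convDen ξ (n + 1) := by
  induction n using Nat.twoStepInduction with
  | zero => rfl
  | one => simpa [convDen] using one_le_partialQuot_succ hξ 0
  | more n ih₀ ih₁ => linarith [convDen_add_two_ge hξ (n + 1) (by linarith)]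

lemma le_convDen_succ (hξ : Irrational ξ) (n : ℕ) : (n : ℤ) ≤ convDen ξ (n + 1) := by
  induction n using Nat.twoStepInduction with
  | zero => exact zero_le_one
  | one => exact one_le_convDen_succ hξ 1
  | more n ih₀ ih₁ =>
    have h : convDen ξ (n + 2) + convDen ξ (n + 1) ≤ convDen ξ (n + 3) :=
      convDen_add_two_ge hξ (n + 1) (by linarith [one_le_convDen_succ hξ (n + 1)])
    have h₁ : (n : ℤ) + 1 ≤ convDen ξ (n + 2) := by exact_mod_cast ih₁
    have := one_le_convDen_succ hξ n
    show ((n + 2 : ℕ) : ℤ) ≤ convDen ξ (n + 3)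
    push_cast
    linarith

lemma convErr_succ_mul_add (hξ : Irrational ξ) (n : ℕ) :
    convErr ξ (n + 1) * completeQuot ξ (n + 1) + convErr ξ n = 0 := by
  induction n with
  | zero =>
    have hfract : Int.fract ξ ≠ 0 := (Int.fract_pos.2 (hξ.ne_int _)).ne'
    simp only [convErr, convNum, convDen, completeQuot, partialQuot]
    rw [← Int.self_sub_floor] at hfract ⊢
    field_simp
    push_cast
    ring
  | succ n ih =>
    have hX := (zero_lt_one.trans (one_lt_completeQuot_succ hξ (n + 1))).ne'
    rw [convErr_add_two, eq_neg_of_add_eq_zero_right ih, completeQuot_eq_add_inv ξ (n + 1)]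
    field_simp
    ring

lemma convDen_mul_abs_convErr (hξ : Irrational ξ) (n : ℕ) :
    convDen ξ (n + 1) * |convErr ξ (n + 1)| =
      (completeQuot ξ (n + 1) + convDen ξ n / convDen ξ (n + 1))⁻¹ := by
  have hq : (0 : ℝ) < convDen ξ (n + 1) := by exact_mod_cast one_le_convDen_succ hξ n
  have hq₀ : (0 : ℝ) ≤ convDen ξ n := by
    cases n with
    | zero => simp [convDen]
    | succ n => exact_mod_cast (zero_le_one.trans (one_le_convDen_succ hξ n))
  have hX := one_lt_completeQuot_succ hξ n
  have hD : 0 < convDen ξ (n + 1) * completeQuot ξ (n + 1) + convDen ξ n := by positivity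
  have hdet := convDen_mul_convErr_sub ξ n
  rw [eq_neg_of_add_eq_zero_right (convErr_succ_mul_add hξ n)] at hdet
  have habs : |convErr ξ (n + 1)| *
      (convDen ξ (n + 1) * completeQuot ξ (n + 1) + convDen ξ n) = 1 :=
    calc _ = |-(convErr ξ (n + 1) *
          (convDen ξ (n + 1) * completeQuot ξ (n + 1) + convDen ξ n))| := by
          rw [abs_neg, abs_mul, abs_of_pos hD]
      _ = |(-1 : ℝ) ^ (n + 1)| := by rw [← hdet]; ring_nf
      _ = 1 := by simp
  rw [eq_inv_of_mul_eq_one_left habs]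
  field_simp

end ContinuedFractions

section Hurwitz

lemma irrational_sqrt_five_sub_one_div_two : Irrational ((√5 - 1) / 2) := by
  have h := (Nat.prime_five.irrational_sqrt.sub_intCast 1).div_natCast two_ne_zero
  norm_num at h
  exact h

/-- The hypotheses give `v² - √5 v + 1 ≤ 0`, and `(√5 - 1)/2` is the smaller root. -/
lemma sqrt_five_sub_one_div_two_le {u v : ℝ} (hu : 0 < u) (hv : 0 < v)
    (h₁ : u + v ≤ √5) (h₂ : u⁻¹ + v⁻¹ ≤ √5) : (√5 - 1) / 2 ≤ v := by
  have h5 : √5 ^ 2 = 5 := Real.sq_sqrt (by norm_num)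
  have h₂' : u + v ≤ √5 * u * v := by
    rw [inv_add_inv hu.ne' hv.ne', div_le_iff₀ (by positivity)] at h₂
    linarith
  have hquad : v ^ 2 - √5 * v + 1 ≤ 0 := by nlinarith [mul_pos hu hv]
  nlinarith [Real.sqrt_nonneg 5]

variable {ξ : ℝ}

lemma convDen_add_two_div (hξ : Irrational ξ) (n : ℕ) :
    (convDen ξ (n + 2) : ℝ) / convDen ξ (n + 1) =
      partialQuot ξ (n + 1) + convDen ξ n / convDen ξ (n + 1) := by
  have hq : (convDen ξ (n + 1) : ℝ) ≠ 0 := by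
    exact_mod_cast (zero_lt_one.trans_le (one_le_convDen_succ hξ n)).ne'
  rw [convDen_add_two]
  push_cast
  field_simp

/-- By `convDen_mul_abs_convErr` this is Hurwitz's bound for one of three consecutive
convergents. Otherwise two applications of `sqrt_five_sub_one_div_two_le` squeeze the rational
`qₙ₊₂ / qₙ₊₃` onto `(√5 - 1)/2`. -/
lemma exists_sqrt_five_lt_completeQuot_add (hξ : Irrational ξ) (n : ℕ) :
    ∃ i, n ≤ i ∧ i ≤ n + 2 ∧
      √5 < completeQuot ξ (i + 1) + convDen ξ i / convDen ξ (i + 1) := by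
  by_contra! h
  have hq (j : ℕ) : (0 : ℝ) < convDen ξ (j + 1) := by
    exact_mod_cast zero_lt_one.trans_le (one_le_convDen_succ hξ j)
  have hge (j : ℕ) (hj₀ : n ≤ j) (hj₁ : j ≤ n + 1) :
      (√5 - 1) / 2 ≤ convDen ξ (j + 1) / convDen ξ (j + 2) := by
    refine sqrt_five_sub_one_div_two_le (one_pos.trans (one_lt_completeQuot_succ hξ (j + 1)))
      (div_pos (hq j) (hq (j + 1))) (h (j + 1) (by omega) (by omega)) ?_
    rw [inv_div, convDen_add_two_div hξ]
    have hX := completeQuot_eq_add_inv ξ (j + 1)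
    linarith [h j hj₀ (by omega)]
  have h₁ : (√5 - 1) / 2 ≤ (convDen ξ (n + 1) : ℝ) / convDen ξ (n + 2) := hge n le_rfl (by omega)
  have h₂ : (√5 - 1) / 2 ≤ (convDen ξ (n + 2) : ℝ) / convDen ξ (n + 3) :=
    hge (n + 1) (by omega) le_rfl
  have hle : (convDen ξ (n + 2) : ℝ) / convDen ξ (n + 3) ≤ (√5 - 1) / 2 := by
    set r := (convDen ξ (n + 2) : ℝ) / convDen ξ (n + 3)
    have hr : 0 < r := div_pos (hq (n + 1)) (hq (n + 2))
    have hA : (1 : ℝ) ≤ partialQuot ξ (n + 2) := by exact_mod_cast one_le_partialQuot_succ hξ _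
    have hinv : r⁻¹ = partialQuot ξ (n + 2) + convDen ξ (n + 1) / convDen ξ (n + 2) := by
      rw [inv_div]
      exact convDen_add_two_div hξ (n + 1)
    have hgolden : (√5 - 1) / 2 * (1 + (√5 - 1) / 2) = 1 := by
      linear_combination (1 / 4 : ℝ) * Real.sq_sqrt (show (0 : ℝ) ≤ 5 by norm_num)
    calc r = r * ((√5 - 1) / 2 * (1 + (√5 - 1) / 2)) := by rw [hgolden, mul_one]
      _ ≤ r * ((√5 - 1) / 2 * r⁻¹) := by
          gcongr
          · linarith [Real.one_le_sqrt.2 (show (1 : ℝ) ≤ 5 by norm_num)]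
          · linarith
      _ = (√5 - 1) / 2 := by field_simp
  exact irrational_sqrt_five_sub_one_div_two.ne_rat ((convDen ξ (n + 2) : ℚ) / convDen ξ (n + 3))
    (by push_cast; linarith)

theorem frequently_mul_abs_sub_round_lt (hξ : Irrational ξ) :
    ∃ᶠ q : ℕ in atTop, q * |q * ξ - round (q * ξ)| < 1 / √5 := by
  rw [frequently_atTop]
  intro N
  obtain ⟨i, hNi, -, hi⟩ := exists_sqrt_five_lt_completeQuot_add hξ N
  obtain ⟨q, hq⟩ := Int.eq_ofNat_of_zero_le (zero_le_one.trans (one_le_convDen_succ hξ i))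
  have hiq : i ≤ q := by exact_mod_cast hq ▸ le_convDen_succ hξ i
  refine ⟨q, hNi.trans hiq, ?_⟩
  have hS : 0 < √5 := by positivity
  calc (q : ℝ) * |q * ξ - round (q * ξ)| ≤ q * |q * ξ - convNum ξ (i + 1)| :=
        mul_le_mul_of_nonneg_left (round_le _ _) q.cast_nonneg
    _ = (completeQuot ξ (i + 1) + convDen ξ i / convDen ξ (i + 1))⁻¹ := by
        rw [← convDen_mul_abs_convErr hξ, convErr, hq]
        push_cast
        rfl
    _ < 1 / √5 := by
        rw [one_div]
        exact (inv_lt_inv₀ (hS.trans hi) hS).2 hi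

lemma inv_le_abs_mul_golden_sub_round {m : ℕ} (hm : m ≠ 0) :
    (√5 * m + 1 / 2)⁻¹ ≤ |m * ((√5 - 1) / 2) - round (m * ((√5 - 1) / 2))| := by
  set x := (m : ℝ) * ((√5 - 1) / 2)
  set p := round x
  have hx : Irrational x := irrational_sqrt_five_sub_one_div_two.natCast_mul hm
  have h5 : √5 ^ 2 = 5 := Real.sq_sqrt (by norm_num)
  have hnorm : (x - p) * (x + p + m) = ((m ^ 2 - p * m - p ^ 2 : ℤ) : ℝ) := by
    simp only [x]
    push_cast
    linear_combination ((m : ℝ) ^ 2 / 4) * h5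
  have hne : (m ^ 2 - p * m - p ^ 2 : ℤ) ≠ 0 := by
    intro h0
    rw [h0, Int.cast_zero, mul_eq_zero] at hnorm
    rcases hnorm with h | h
    · exact hx.ne_int p (by linarith)
    · exact hx.ne_int (-p - m) (by push_cast; linarith)
  have hone : (1 : ℝ) ≤ |(x - p) * (x + p + m)| := by
    rw [hnorm, ← Int.cast_abs]
    exact_mod_cast Int.one_le_abs hne
  have hround := abs_sub_round x
  have hconj : |x + p + m| ≤ √5 * m + 1 / 2 := by
    rw [show x + p + m = √5 * m - (x - p) by simp only [x]; ring]
    refine (abs_sub _ _).trans ?_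
    rw [abs_of_nonneg (by positivity)]
    linarith
  rw [inv_le_iff_one_le_mul₀ (by positivity)]
  calc (1 : ℝ) ≤ |x - p| * |x + p + m| := by rwa [← abs_mul]
    _ ≤ |x - p| * (√5 * m + 1 / 2) := mul_le_mul_of_nonneg_left hconj (abs_nonneg _)

end Hurwitz

lemma le_kmax {s : ℕ → ℤ} {m k : ℕ} (h : HasAbPow s m k) : (k : ℝ≥0∞) ≤ kmax s m :=
  le_iSup₂ (f := fun k (_ : HasAbPow s m k) => (k : ℝ≥0∞)) k h

lemma kmax_le_ofReal {s : ℕ → ℤ} {m : ℕ} {b : ℝ} (h : ∀ k, HasAbPow s m k → (k : ℝ) ≤ b) :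
    kmax s m ≤ ENNReal.ofReal b :=
  iSup₂_le fun k hk => by simpa using ENNReal.ofReal_le_ofReal (h k hk)

lemma ENNReal.ofReal_div_natCast (x : ℝ) {m : ℕ} (hm : 0 < m) :
    ENNReal.ofReal (x / m) = ENNReal.ofReal x / m := by
  rw [ENNReal.ofReal_div_of_pos (by exact_mod_cast hm), ENNReal.ofReal_natCast]

lemma tendsto_ofReal_add_div_natCast (a c : ℝ) :
    Tendsto (fun m : ℕ => ENNReal.ofReal (a + c / m)) atTop (𝓝 (ENNReal.ofReal a)) := by
  apply ENNReal.tendsto_ofReal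
  simpa using
    tendsto_const_nhds.add (tendsto_const_nhds.div_atTop (tendsto_natCast_atTop_atTop (R := ℝ)))

theorem sqrt_five_le_abCritExp_sturmian {α : ℝ} (hα : Irrational α) (ρ : ℝ) :
    ENNReal.ofReal √5 ≤ abCritExp (sturmian α ρ) := by
  have hfreq : ∃ᶠ m : ℕ in atTop,
      ENNReal.ofReal (√5 + -1 / m) ≤ kmax (sturmian α ρ) m / m := by
    refine ((frequently_mul_abs_sub_round_lt hα).and_eventually (eventually_gt_atTop 0)).mono ?_
    rintro m ⟨hm, hm₀⟩
    have hS : 0 < √5 := by positivity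
    have hpow : HasAbPow (sturmian α ρ) m ⌊√5 * m⌋₊ := by
      apply hasAbPow_sturmian_of_mul_abs_sub_round_lt_one hα
      rw [lt_div_iff₀ hS] at hm
      calc (⌊√5 * m⌋₊ : ℝ) * |m * α - round (m * α)| ≤ √5 * m * |m * α - round (m * α)| := by
            gcongr
            exact Nat.floor_le (by positivity)
        _ < 1 := by linarith
    have hfloor : √5 * m - 1 ≤ ⌊√5 * m⌋₊ := by linarith [Nat.lt_floor_add_one (√5 * m)]
    calc ENNReal.ofReal (√5 + -1 / m) = ENNReal.ofReal ((√5 * m - 1) / m) := by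
          congr 1
          field_simp
          ring
      _ ≤ ENNReal.ofReal (⌊√5 * m⌋₊ / m) := by gcongr
      _ = (⌊√5 * m⌋₊ : ℝ≥0∞) / m := by rw [ENNReal.ofReal_div_natCast _ hm₀, ENNReal.ofReal_natCast]
      _ ≤ kmax (sturmian α ρ) m / m := by gcongr; exact le_kmax hpow
  calc ENNReal.ofReal √5 = liminf (fun m : ℕ => ENNReal.ofReal (√5 + -1 / m)) atTop :=
        (tendsto_ofReal_add_div_natCast _ _).liminf_eq.symm
    _ ≤ abCritExp (sturmian α ρ) := liminf_le_limsup_of_frequently_le hfreq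

theorem abCritExp_sturmian_golden_le (ρ : ℝ) :
    abCritExp (sturmian ((√5 - 1) / 2) ρ) ≤ ENNReal.ofReal √5 := by
  have hev : ∀ᶠ m : ℕ in atTop,
      kmax (sturmian ((√5 - 1) / 2) ρ) m / m ≤ ENNReal.ofReal (√5 + 1 / 2 / m) := by
    filter_upwards [eventually_gt_atTop 0] with m hm
    have hkmax : kmax (sturmian ((√5 - 1) / 2) ρ) m ≤ ENNReal.ofReal (√5 * m + 1 / 2) := by
      refine kmax_le_ofReal fun k hk => ?_
      have hlt := hk.mul_abs_sub_round_lt_one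
      have hdist := inv_le_abs_mul_golden_sub_round hm.ne'
      have hpos : 0 < √5 * m + 1 / 2 := by positivity
      rw [inv_le_iff_one_le_mul₀ hpos] at hdist
      nlinarith [k.cast_nonneg (α := ℝ)]
    calc kmax (sturmian ((√5 - 1) / 2) ρ) m / m ≤ ENNReal.ofReal (√5 * m + 1 / 2) / m := by
          gcongr
      _ = ENNReal.ofReal (√5 + 1 / 2 / m) := by
          rw [← ENNReal.ofReal_div_natCast _ hm]
          congr 1
          field_simp
  exact (limsup_le_limsup hev).trans_eq (tendsto_ofReal_add_div_natCast _ _).limsup_eq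

/-- The abelian critical exponent of every Sturmian word is at least `√5`, and the
abelian critical exponent of the Fibonacci word (slope `(√5 - 1)/2`) equals `√5`. -/
theorem stmt15 :
    (∀ α ρ : ℝ, Irrational α → 0 < α → α < 1 →
      ENNReal.ofReal (Real.sqrt 5) ≤ abCritExp (sturmian α ρ)) ∧
    abCritExp (sturmian ((Real.sqrt 5 - 1) / 2) ((Real.sqrt 5 - 1) / 2)) =
      ENNReal.ofReal (Real.sqrt 5) :=
  ⟨fun _ ρ hα _ _ => sqrt_five_le_abCritExp_sturmian hα ρ,
    le_antisymm (abCritExp_sturmian_golden_le _)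
      (sqrt_five_le_abCritExp_sturmian irrational_sqrt_five_sub_one_div_two _)⟩
end
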